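/- Let I be an instance with types satisfying the supply condition, let J ∈ A_γ(Q(I), h) for some signpost sequence γ, and let E_J be the output of the greedy & parity correction algorithm. Suppose the type-oblivious solution T_J does not satisfy type parity (A), and let ℓ = Prefix(V(E_J), V(T_J)) < |C|. Then E_J(c_{ℓ+1}) = 0 and T_J(c_{ℓ+1}) = 1, where c_{ℓ+1} is the (ℓ+1)-st candidate in the ranking order ≻. -/

import Mathlib

open Finset

/-- A signpost sequence: `γ 0 = 0`, `γ n ∈ [n-1, n]` for `n ≥ 1`, and the
disjunction property. -/
def Signpost (γ : ℕ → ℝ) : Prop :=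
  γ 0 = 0 ∧
  (∀ n : ℕ, 1 ≤ n → ((n : ℝ) - 1 ≤ γ n ∧ γ n ≤ n)) ∧
  ((∃ k : ℕ, 2 ≤ k ∧ γ k = (k : ℝ) - 1) → ∀ l : ℕ, 1 ≤ l → γ l < l) ∧
  ((∃ k : ℕ, 1 ≤ k ∧ γ k = (k : ℝ)) → ∀ l : ℕ, 2 ≤ l → (l : ℝ) - 1 < γ l)

/-- The rounding rule `R_γ` of a signpost sequence, as a set-valued map:
`R_γ(0) = {0}`, `R_γ(t) = {n}` for `t ∈ (γ n, γ (n+1))`, and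
`R_γ(t) = {n-1, n}` when `t = γ n > 0`. -/
def roundSet (γ : ℕ → ℝ) (t : ℝ) : Set ℕ :=
  {k | (t = 0 ∧ k = 0) ∨ (γ k < t ∧ t < γ (k + 1)) ∨ (0 < t ∧ (t = γ k ∨ t = γ (k + 1)))}

/-- The divisor method solution set `A_γ(Q, h)`. -/
def divisorSet (γ : ℕ → ℝ) {n : ℕ} (Q : Fin n → ℝ) (h : ℕ) : Set (Fin n → ℕ) :=
  {S | (∑ i, S i) = h ∧ ∃ lam : ℝ, 0 < lam ∧ ∀ i, S i ∈ roundSet γ (Q i / lam)}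

/-- The two candidate types. -/
inductive MType
  | f | m
deriving DecidableEq

instance instFintypeMType : Fintype MType :=
  ⟨{MType.f, MType.m}, fun x => by cases x <;> simp⟩

/-- The other type. -/
def MType.other : MType → MType
  | .f => .m
  | .m => .f

/-- An instance of the apportionment problem with type parity: a finite candidate
set `C`, a party map, a (nonnegative real) vote map, a type map, a house size
`h ≥ 1` and a total order (the field `ord`) refining the votes. -/
structure TypedInstance (n : ℕ) (C : Type) [Fintype C] [DecidableEq C] where
  ord : LinearOrder C
  party : C → Fin n
  votes : C → ℝ
  votes_nonneg : ∀ c, 0 ≤ votes c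
  mtype : C → MType
  h : ℕ
  h_pos : 1 ≤ h
  refines : ∀ c c' : C, votes c' < votes c → ord.lt c' c

namespace TypedInstance

variable {n : ℕ} {C : Type} [Fintype C] [DecidableEq C]

/-- The candidates of party `i`. -/
def Ci (I : TypedInstance n C) (i : Fin n) : Finset C :=
  univ.filter fun c => I.party c = i

/-- The candidates of type `t`. -/
def Ct (I : TypedInstance n C) (t : MType) : Finset C :=
  univ.filter fun c => I.mtype c = t

/-- The candidates of party `i` and type `t`. -/
def Cit (I : TypedInstance n C) (i : Fin n) (t : MType) : Finset C :=
  univ.filter fun c => I.party c = i ∧ I.mtype c = t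

/-- The party vote totals `Q(I)`. -/
def Q (I : TypedInstance n C) : Fin n → ℝ := fun i => ∑ c ∈ I.Ci i, I.votes c

/-- The party × type vote totals `P(I)`. -/
def P (I : TypedInstance n C) : Fin n → MType → ℝ := fun i t => ∑ c ∈ I.Cit i t, I.votes c

/-- The supply matrix `S(I)`. -/
def S (I : TypedInstance n C) : Fin n → MType → ℕ := fun i t => (I.Cit i t).card

/-- The supply condition: `|C_i^t| ≥ ⌈h/2⌉` for every party `i` and type `t`. -/
def SupplyCond (I : TypedInstance n C) : Prop :=
  ∀ (i : Fin n) (t : MType), (I.h + 1) / 2 ≤ (I.Cit i t).card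

/-- Type parity condition (A): the numbers of elected candidates of the two types
differ by exactly `h mod 2`. Allocations are represented by the finset of elected
candidates. -/
def CondA (I : TypedInstance n C) (E : Finset C) : Prop :=
  (((E.filter fun c => I.mtype c = MType.f).card : ℤ) -
    ((E.filter fun c => I.mtype c = MType.m).card : ℤ)).natAbs = I.h % 2

instance (I : TypedInstance n C) (E : Finset C) : Decidable (I.CondA E) := by
  unfold CondA; infer_instance

/-- The number of elected candidates of each party. -/
def partyCount (I : TypedInstance n C) (E : Finset C) : Fin n → ℕ :=
  fun i => (E.filter fun c => I.party c = i).card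

/-- The number of elected candidates of each type. -/
def typeCount (I : TypedInstance n C) (E : Finset C) : MType → ℕ :=
  fun t => (E.filter fun c => I.mtype c = t).card

/-- Party proportionality condition (B) w.r.t. a signpost sequence `γ`. -/
def CondB (I : TypedInstance n C) (γ : ℕ → ℝ) (E : Finset C) : Prop :=
  ∃ J ∈ divisorSet γ I.Q I.h, ∀ i, I.partyCount E i = J i

/-- The set `X(I, γ)` of feasible allocations. -/
def X (I : TypedInstance n C) (γ : ℕ → ℝ) : Set (Finset C) :=
  {E | I.CondA E ∧ I.CondB γ E}

/-- The polytope `Z(I, J, γ)` of fractional allocations. -/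
def Z (I : TypedInstance n C) (J : Fin n → ℕ) : Set (Fin n → MType → ℝ) :=
  {y | (∀ t : MType, ((I.h / 2 : ℕ) : ℝ) ≤ ∑ i, y i t) ∧
       (∀ i : Fin n, y i MType.f + y i MType.m = (J i : ℝ)) ∧
       (∀ (i : Fin n) (t : MType), 0 ≤ y i t ∧ y i t ≤ ((I.Cit i t).card : ℝ))}

/-- The scaled instance `αI` (same candidate order). -/
def scale (I : TypedInstance n C) (α : ℝ) (hα : 0 < α) : TypedInstance n C where
  ord := I.ord
  party := I.party
  votes := fun c => α * I.votes c
  votes_nonneg := fun c => mul_nonneg hα.le (I.votes_nonneg c)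
  mtype := I.mtype
  h := I.h
  h_pos := I.h_pos
  refines := fun c c' hlt => I.refines c c' (lt_of_mul_lt_mul_left hlt hα.le)

/-- `G` is a voting increment of `I` in candidate `c`: identical to `I` except
that `c` garners strictly more votes. -/
def VotingIncrement (I G : TypedInstance n C) (c : C) : Prop :=
  G.party = I.party ∧ G.mtype = I.mtype ∧ G.h = I.h ∧
  I.votes c < G.votes c ∧ ∀ c' : C, c' ≠ c → G.votes c' = I.votes c'

/-- The rank of a candidate in the order `≻`: position `1` is the top candidate. -/
def rank (I : TypedInstance n C) (c : C) : ℕ :=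
  letI := I.ord
  (univ.filter fun c' => c ≤ c').card

/-- The top `k` candidates of a subset `D` according to the order of `I`. -/
def topOf (I : TypedInstance n C) (D : Finset C) (k : ℕ) : Finset C :=
  letI := I.ord
  D.filter fun c => (D.filter fun c' => c ≤ c').card ≤ k

/-- The type-oblivious solution `T_J`: in every party `i`, the top `J i`
candidates of `C_i` are elected. -/
def oblivious (I : TypedInstance n C) (J : Fin n → ℕ) : Finset C :=
  univ.filter fun c => c ∈ I.topOf (I.Ci (I.party c)) (J (I.party c))

/-- The over-represented type of an allocation (type `f` in case of a tie). -/
def overType (I : TypedInstance n C) (E : Finset C) : MType :=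
  if I.typeCount E MType.m ≤ I.typeCount E MType.f then MType.f else MType.m

/-- One parity-correction swap: the worst-ranked elected candidate of the
over-represented type is replaced by the best-ranked unelected candidate of the
same party and of the under-represented type (if any; otherwise nothing happens). -/
def swapStep (I : TypedInstance n C) (E : Finset C) : Finset C :=
  letI := I.ord
  let t := I.overType E
  let elected := E.filter fun c => I.mtype c = t
  if hE : elected.Nonempty then
    let s := elected.min' hE
    let pool := univ.filter fun c => c ∉ E ∧ I.party c = I.party s ∧ I.mtype c = t.other
    if hp : pool.Nonempty then insert (pool.max' hp) (E.erase s) else E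
  else E

/-- The parity-correction loop (with fuel). -/
def greedyAux (I : TypedInstance n C) : ℕ → Finset C → Finset C
  | 0, E => E
  | k + 1, E => if I.CondA E then E else greedyAux I k (I.swapStep E)

/-- The output `E_J` of the greedy & parity correction algorithm. -/
def greedy (I : TypedInstance n C) (J : Fin n → ℕ) : Finset C :=
  greedyAux I I.h (I.oblivious J)

/-- The greedy & parity correction mechanism `M^G`. -/
def MG (I : TypedInstance n C) (γ : ℕ → ℝ) : Set (Finset C) :=
  {E | ∃ J ∈ divisorSet γ I.Q I.h, E = I.greedy J}

/-- Two allocations agree on all candidates of rank at most `l`. -/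
def agreeUpTo (I : TypedInstance n C) (E₁ E₂ : Finset C) (l : ℕ) : Prop :=
  ∀ c : C, I.rank c ≤ l → (c ∈ E₁ ↔ c ∈ E₂)

instance (I : TypedInstance n C) (E₁ E₂ : Finset C) (l : ℕ) :
    Decidable (I.agreeUpTo E₁ E₂ l) := by
  unfold agreeUpTo; infer_instance

/-- The length of the common prefix of two allocations (w.r.t. the ranking). -/
def prefixLen (I : TypedInstance n C) (E₁ E₂ : Finset C) : ℕ :=
  ((Finset.range (Fintype.card C + 1)).filter fun l => I.agreeUpTo E₁ E₂ l).sup id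

/-- The vote-leading type (type `f` in case of a tie; this tie-breaking rule is
scaling invariant). -/
noncomputable def voteLeading (I : TypedInstance n C) : MType :=
  if (∑ c ∈ I.Ct MType.f, I.votes c) < (∑ c ∈ I.Ct MType.m, I.votes c) then MType.m
  else MType.f

/-- The parity marginal `φ(I)`: for even `h` both types get `h/2`; for odd `h` the
vote-leading type gets `⌈h/2⌉`. -/
noncomputable def parityMarginal (I : TypedInstance n C) : MType → ℕ :=
  fun t => if t = I.voteLeading then (I.h + 1) / 2 else I.h / 2

end TypedInstance

/-- `(x, lam, mu)` is a `δ`-biproportional solution of the two-dimensional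
instance with supply `(P, S, J, φ)`. -/
def IsBipropSol (δ : ℕ → ℝ) {n : ℕ} (P : Fin n → MType → ℝ) (S : Fin n → MType → ℕ)
    (J : Fin n → ℕ) (φ : MType → ℕ) (x : Fin n → MType → ℕ)
    (lam : Fin n → ℝ) (mu : MType → ℝ) : Prop :=
  (∀ i, 0 < lam i) ∧ (∀ t, 0 < mu t) ∧
  (∀ (i : Fin n) (t : MType), x i t < S i t → x i t ∈ roundSet δ (P i t * lam i * mu t)) ∧
  (∀ i : Fin n, x i MType.f + x i MType.m = J i) ∧
  (∀ t : MType, (∑ i, x i t) = φ t) ∧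
  (∀ (i : Fin n) (t : MType), x i t ≤ S i t)

/-- The set `B_δ(P, S, J, φ)` of `δ`-biproportional solutions. -/
def bipropSet (δ : ℕ → ℝ) {n : ℕ} (P : Fin n → MType → ℝ) (S : Fin n → MType → ℕ)
    (J : Fin n → ℕ) (φ : MType → ℕ) : Set (Fin n → MType → ℕ) :=
  {x | ∃ lam mu, IsBipropSol δ P S J φ x lam mu}

/-- `δ`-biproportional solutions of a two-dimensional instance `(P, J, φ)`
without supply bounds. -/
def IsBipropSolNS (δ : ℕ → ℝ) {n : ℕ} (P : Fin n → MType → ℝ)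
    (J : Fin n → ℕ) (φ : MType → ℕ) (x : Fin n → MType → ℕ)
    (lam : Fin n → ℝ) (mu : MType → ℝ) : Prop :=
  (∀ i, 0 < lam i) ∧ (∀ t, 0 < mu t) ∧
  (∀ (i : Fin n) (t : MType), x i t ∈ roundSet δ (P i t * lam i * mu t)) ∧
  (∀ i : Fin n, x i MType.f + x i MType.m = J i) ∧
  (∀ t : MType, (∑ i, x i t) = φ t)

/-- The set `B_δ(P, J, φ)` for instances without supply bounds. -/
def bipropSetNS (δ : ℕ → ℝ) {n : ℕ} (P : Fin n → MType → ℝ)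
    (J : Fin n → ℕ) (φ : MType → ℕ) : Set (Fin n → MType → ℕ) :=
  {x | ∃ lam mu, IsBipropSolNS δ P J φ x lam mu}

/-- `F` is a fair share (matrix scaling) of the two-dimensional instance
`(P, J, φ)`. -/
def IsFairShare {n : ℕ} (P : Fin n → MType → ℝ) (J : Fin n → ℕ) (φ : MType → ℕ)
    (F : Fin n → MType → ℝ) : Prop :=
  ∃ (lam : Fin n → ℝ) (mu : MType → ℝ),
    (∀ i, 0 < lam i) ∧ (∀ t, 0 < mu t) ∧ (∀ i t, 0 < F i t) ∧
    (∀ (i : Fin n) (t : MType), F i t = P i t * lam i * mu t) ∧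
    (∀ i : Fin n, F i MType.f + F i MType.m = (J i : ℝ)) ∧
    (∀ t : MType, (∑ i, F i t) = (φ t : ℝ))

namespace TypedInstance

variable {n : ℕ} {C : Type} [Fintype C] [DecidableEq C]

/-- The allocation `E_x` electing, for every party `i` and type `t`, the top
`x i t` candidates of `C_i^t`. -/
def allocOf (I : TypedInstance n C) (x : Fin n → MType → ℕ) : Finset C :=
  univ.filter fun c =>
    c ∈ I.topOf (I.Cit (I.party c) (I.mtype c)) (x (I.party c) (I.mtype c))

/-- The `δ`-biproportional parity mechanism `M^B_δ`. -/
def MB (I : TypedInstance n C) (δ γ : ℕ → ℝ) : Set (Finset C) :=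
  {E | ∃ J ∈ divisorSet γ I.Q I.h,
        ∃ x ∈ bipropSet δ I.P I.S J I.parityMarginal, E = I.allocOf x}

end TypedInstance

namespace TypedInstance

variable {n : ℕ} {C : Type} [Fintype C] [DecidableEq C] (I : TypedInstance n C)

lemma one_le_rank (c : C) : 1 ≤ I.rank c := by
  let _ := I.ord
  exact card_pos.2 ⟨c, by simp⟩

lemma rank_le_card (c : C) : I.rank c ≤ Fintype.card C :=
  card_le_univ _

lemma rank_lt_rank {c d : C} (h : I.ord.lt c d) : I.rank d < I.rank c := by
  let _ := I.ord
  refine card_lt_card ⟨fun x hx => ?_, fun hsub => ?_⟩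
  · simp only [mem_filter, mem_univ, true_and] at hx ⊢
    exact (h.trans_le hx).le
  · have hc : c ∈ univ.filter fun c' => d ≤ c' := hsub (by simp)
    simp only [mem_filter, mem_univ, true_and] at hc
    exact hc.not_gt h

lemma rank_injective : Function.Injective I.rank := by
  let _ := I.ord
  intro c d h
  rcases lt_trichotomy c d with hlt | rfl | hlt
  · exact absurd h (I.rank_lt_rank hlt).ne'
  · rfl
  · exact absurd h (I.rank_lt_rank hlt).ne

lemma lt_of_mem_topOf {D : Finset C} {k : ℕ} {c d : C} (hd : d ∈ I.topOf D k) (hc : c ∈ D)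
    (hck : c ∉ I.topOf D k) : I.ord.lt c d := by
  let _ := I.ord
  simp only [topOf, mem_filter] at hd hck
  refine lt_of_not_ge fun hdc => hck ⟨hc, le_trans (card_le_card fun x hx => ?_) hd.2⟩
  simp only [mem_filter] at hx ⊢
  exact ⟨hx.1, hdc.trans hx.2⟩

lemma mem_oblivious {J : Fin n → ℕ} {c : C} :
    c ∈ I.oblivious J ↔ c ∈ I.topOf (I.Ci (I.party c)) (J (I.party c)) := by
  simp [oblivious]

lemma partyCount_insert_erase {E : Finset C} {s b : C} (hs : s ∈ E) (hb : b ∉ E)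
    (hparty : I.party b = I.party s) : I.partyCount (insert b (E.erase s)) = I.partyCount E := by
  funext i
  unfold partyCount
  rw [filter_insert, filter_erase]
  by_cases hi : I.party s = i
  · have hsi : s ∈ E.filter fun c => I.party c = i := mem_filter.2 ⟨hs, hi⟩
    rw [if_pos (hparty.trans hi), card_insert_of_notMem (by simp [hb]), card_erase_of_mem hsi,
      Nat.sub_add_cancel (card_pos.2 ⟨s, hsi⟩)]
  · rw [if_neg (by rwa [hparty]), erase_eq_of_notMem (by simp [hi])]

lemma partyCount_swapStep (E : Finset C) : I.partyCount (I.swapStep E) = I.partyCount E := by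
  let _ := I.ord
  unfold swapStep
  simp only
  split_ifs with hE hp
  · have hs := (mem_filter.1 (min'_mem _ hE)).1
    obtain ⟨-, hb, hparty, -⟩ := mem_filter.1 (max'_mem _ hp)
    exact I.partyCount_insert_erase hs hb hparty
  · rfl
  · rfl

lemma partyCount_greedyAux (k : ℕ) (E : Finset C) :
    I.partyCount (I.greedyAux k E) = I.partyCount E := by
  induction k generalizing E with
  | zero => rfl
  | succ k ih =>
    unfold greedyAux
    split_ifs
    · rfl
    · rw [ih, partyCount_swapStep]

lemma partyCount_greedy (J : Fin n → ℕ) :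
    I.partyCount (I.greedy J) = I.partyCount (I.oblivious J) :=
  I.partyCount_greedyAux _ _

lemma agreeUpTo_succ {E₁ E₂ : Finset C} {l : ℕ} (h : I.agreeUpTo E₁ E₂ l) {c : C}
    (hc : I.rank c = l + 1) (hcE : c ∈ E₁ ↔ c ∈ E₂) : I.agreeUpTo E₁ E₂ (l + 1) := by
  intro d hd
  rcases Nat.lt_or_eq_of_le hd with hd | hd
  · exact h d (Nat.lt_succ_iff.1 hd)
  · rwa [I.rank_injective (hd.trans hc.symm)]

lemma agreeUpTo_prefixLen (E₁ E₂ : Finset C) : I.agreeUpTo E₁ E₂ (I.prefixLen E₁ E₂) := by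
  have h0 : 0 ∈ (range (Fintype.card C + 1)).filter (I.agreeUpTo E₁ E₂) :=
    mem_filter.2 ⟨by simp, fun d hd => (Nat.not_succ_le_zero 0 ((I.one_le_rank d).trans hd)).elim⟩
  obtain ⟨l, hl, hsup⟩ := exists_mem_eq_sup _ ⟨0, h0⟩ id
  rw [prefixLen, hsup]
  exact (mem_filter.1 hl).2

lemma mem_iff_notMem_of_rank_eq_prefixLen_succ {E₁ E₂ : Finset C} {c : C}
    (hc : I.rank c = I.prefixLen E₁ E₂ + 1) : c ∈ E₁ ↔ c ∉ E₂ := by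
  by_contra hne
  have hagree := I.agreeUpTo_succ (I.agreeUpTo_prefixLen E₁ E₂) hc (by tauto)
  have hmem : I.prefixLen E₁ E₂ + 1 ∈ (range (Fintype.card C + 1)).filter (I.agreeUpTo E₁ E₂) :=
    mem_filter.2 ⟨mem_range.2 (Nat.lt_succ_of_le (hc ▸ I.rank_le_card c)), hagree⟩
  exact (le_sup (f := id) hmem).not_gt (Nat.lt_succ_self _)

/-- If `c ∈ E \ T_J`, equal party counts force some `d ∈ T_J \ E` in the party of `c`; since
`T_J` elects the top candidates of that party, `d ≻ c`, so the two allocations already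
disagree above `c`. -/
lemma mem_oblivious_of_agreeUpTo {J : Fin n → ℕ} {E : Finset C}
    (hE : I.partyCount E = I.partyCount (I.oblivious J)) {l : ℕ}
    (hagree : I.agreeUpTo E (I.oblivious J) l) {c : C} (hc : I.rank c ≤ l + 1) (hcE : c ∈ E) :
    c ∈ I.oblivious J := by
  by_contra hcT
  set i := I.party c
  set A := E.filter fun x => I.party x = i
  set B := (I.oblivious J).filter fun x => I.party x = i
  have hcA : c ∈ A \ B := by simp [A, B, hcE, hcT, i]
  obtain ⟨d, hd⟩ : (B \ A).Nonempty := by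
    rw [← card_pos, ← card_sdiff_comm (congrFun hE i)]
    exact card_pos.2 ⟨c, hcA⟩
  simp only [A, B, mem_sdiff, mem_filter, not_and] at hd
  obtain ⟨⟨hdT, hdi⟩, hdE⟩ := hd
  have hcd : I.ord.lt c d := by
    refine I.lt_of_mem_topOf (D := I.Ci i) (k := J i) ?_ (by simp [Ci, i])
      (I.mem_oblivious.not.1 hcT)
    rw [← hdi]
    exact I.mem_oblivious.1 hdT
  have hdl : I.rank d ≤ l := Nat.lt_succ_iff.1 ((I.rank_lt_rank hcd).trans_le hc)
  exact hdE ((hagree d hdl).2 hdT) hdi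

end TypedInstance

theorem stmt8_general {n : ℕ} {C : Type} [Fintype C] [DecidableEq C]
    (I : TypedInstance n C)
    (J : Fin n → ℕ)
    (l : ℕ) (hl : l = I.prefixLen (I.greedy J) (I.oblivious J)) :
    ∀ c : C, I.rank c = l + 1 → c ∉ I.greedy J ∧ c ∈ I.oblivious J := by
  intro c hc
  subst hl
  have hdiffer := I.mem_iff_notMem_of_rank_eq_prefixLen_succ hc
  have hnot : ¬ (c ∈ I.greedy J ∧ c ∉ I.oblivious J) := fun ⟨hcE, hcT⟩ =>
    hcT (I.mem_oblivious_of_agreeUpTo (I.partyCount_greedy J) (I.agreeUpTo_prefixLen _ _)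
      hc.le hcE)
  tauto

/-- if the type-oblivious solution violates type parity and
`ℓ = Prefix(V(E_J), V(T_J)) < |C|`, then the candidate of rank `ℓ+1` is elected
in `T_J` but not in `E_J`. -/
theorem stmt8 {n : ℕ} {C : Type} [Fintype C] [DecidableEq C]
    (γ : ℕ → ℝ) (hγ : Signpost γ)
    (I : TypedInstance n C) (hsup : I.SupplyCond)
    (J : Fin n → ℕ) (hJ : J ∈ divisorSet γ I.Q I.h)
    (hpar : ¬ I.CondA (I.oblivious J))
    (l : ℕ) (hl : l = I.prefixLen (I.greedy J) (I.oblivious J))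
    (hlt : l < Fintype.card C) :
    ∀ c : C, I.rank c = l + 1 → c ∉ I.greedy J ∧ c ∈ I.oblivious J :=
  stmt8_general I J l hl
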